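/- Let n, s be nonnegative integers with s even and let β > 0. Then ∫_{-∞}^{∞} x^{s} e^{-βx²} [H_n(x)]² dx = 2^{2n} β^{-n−(s+1)/2} Σ_{k=0}^{n} C(n,k)² k! (β/2)^k Γ(1/2 − k + n + s/2) · ₂F₁(k − n, 1/2 + k − n; 1/2 + k − n − s/2; β). -/

import Mathlib

open MeasureTheory Finset Real

/-- Pochhammer symbol `(a)_k = a (a+1) ⋯ (a+k-1)`. -/
noncomputable def poch (a : ℝ) (k : ℕ) : ℝ := ∏ i ∈ Finset.range k, (a + i)

/-- Generalized binomial coefficient `C(a, j) = (a-j+1)_j / j!`. -/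
noncomputable def gbinom (a : ℝ) (j : ℕ) : ℝ := poch (a - j + 1) j / (j.factorial : ℝ)

/-- Generalized Laguerre polynomial `L_n^{(α)}`. -/
noncomputable def Lag (α : ℝ) (n : ℕ) (x : ℝ) : ℝ :=
  ∑ i ∈ Finset.range (n + 1),
    ((-1 : ℝ) ^ i / (i.factorial : ℝ)) * gbinom ((n : ℝ) + α) (n - i) * x ^ i

/-- Physicists' Hermite polynomial `H_n`. -/
noncomputable def Herm (n : ℕ) (x : ℝ) : ℝ :=
  ∑ k ∈ Finset.range (n / 2 + 1),
    ((-1 : ℝ) ^ k * (n.factorial : ℝ) / ((k.factorial : ℝ) * ((n - 2 * k).factorial : ℝ))) *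
      (2 * x) ^ (n - 2 * k)

/-- Jacobi polynomial `P_n^{(α,γ)}`. -/
noncomputable def Jac (α γ : ℝ) (n : ℕ) (x : ℝ) : ℝ :=
  ∑ k ∈ Finset.range (n + 1),
    gbinom ((n : ℝ) + α) (n - k) * gbinom ((n : ℝ) + γ) k *
      ((x - 1) / 2) ^ k * ((x + 1) / 2) ^ (n - k)

/-- Terminating Lauricella function of type A. -/
noncomputable def lauricellaA {r : ℕ} (a : ℝ) (m : Fin r → ℕ) (c x : Fin r → ℝ) : ℝ :=
  ∑ j ∈ Fintype.piFinset (fun i => Finset.range (m i + 1)),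
    poch a (∑ i, j i) *
      ∏ i, (poch (-(m i : ℝ)) (j i) / (poch (c i) (j i) * ((j i).factorial : ℝ)) * x i ^ (j i))

/-- Terminating Gauss hypergeometric sum `₂F₁(-k, b; c; x)`. -/
noncomputable def hyp2F1 (k : ℕ) (b c x : ℝ) : ℝ :=
  ∑ j ∈ Finset.range (k + 1),
    poch (-(k : ℝ)) j * poch b j / (poch c j * (j.factorial : ℝ)) * x ^ j

/-- Terminating hypergeometric sum `₃F₂(-k, b₁, b₂; c₁, c₂; x)`. -/
noncomputable def hyp3F2 (k : ℕ) (b₁ b₂ c₁ c₂ x : ℝ) : ℝ :=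
  ∑ j ∈ Finset.range (k + 1),
    poch (-(k : ℝ)) j * poch b₁ j * poch b₂ j /
      (poch c₁ j * poch c₂ j * (j.factorial : ℝ)) * x ^ j

/-- Gauss hypergeometric series `₂F₁(a, b; c; x)` (a terminating series when `a` or `b`
is a nonpositive integer). -/
noncomputable def hypSum (a b c x : ℝ) : ℝ :=
  ∑' j : ℕ, poch a j * poch b j / (poch c j * (j.factorial : ℝ)) * x ^ j

/-- Terminating Appell function `F₂(a; -m₁, -m₂; c₁, c₂; x₁, x₂)`. -/
noncomputable def appellF2 (a : ℝ) (m₁ m₂ : ℕ) (c₁ c₂ x₁ x₂ : ℝ) : ℝ :=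
  ∑ j₁ ∈ Finset.range (m₁ + 1), ∑ j₂ ∈ Finset.range (m₂ + 1),
    poch a (j₁ + j₂) * poch (-(m₁ : ℝ)) j₁ * poch (-(m₂ : ℝ)) j₂ /
      (poch c₁ j₁ * poch c₂ j₂ * (j₁.factorial : ℝ) * (j₂.factorial : ℝ)) * x₁ ^ j₁ * x₂ ^ j₂

/-- `1/z!` with the convention that it vanishes for negative integers `z`. -/
noncomputable def invFacZ (z : ℤ) : ℝ := if 0 ≤ z then ((z.toNat.factorial : ℕ) : ℝ)⁻¹ else 0

/-- Pochhammer symbol extended to integer index via `(a)_k = Γ(a+k)/Γ(a)` for negative `k`. -/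
noncomputable def pochZ (a : ℝ) (k : ℤ) : ℝ :=
  if 0 ≤ k then poch a k.toNat else Real.Gamma (a + (k : ℝ)) / Real.Gamma a

/-!
Feldheim's linearization `H_m H_n = ∑ₖ C(m,k) C(n,k) k! 2ᵏ H_{m+n-2k}` writes `H_n²` as a
combination of the even-index polynomials `H_{2r}`, `r = n - k`. Against the weight
`x^{2σ} e^{-βx²}`, expanding `H_{2r}` into monomials gives a sum of Gaussian moments
`Γ(b) β^{-b}`, `b = σ + r - j + 1/2`. Since `Γ(b) = (-1)ʲ Γ(r + σ + 1/2) / (1/2 - r - σ)ⱼ` and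
`(2r)! / (2r - 2j)! = 4ʲ (-r)ⱼ (1/2 - r)ⱼ` (Legendre duplication for Pochhammer symbols), that
sum is `4^r β^{-(r+σ+1/2)} Γ(r + σ + 1/2) ₂F₁(-r, 1/2 - r; 1/2 - r - σ; β)`.
-/

open scoped Nat

theorem poch_eq_ascPochhammer_eval (a : ℝ) (k : ℕ) :
    poch a k = (ascPochhammer ℝ k).eval a := by
  induction k with
  | zero => simp [poch]
  | succ k ih => rw [poch, prod_range_succ, ← poch, ih, ascPochhammer_succ_eval]

theorem poch_succ (a : ℝ) (k : ℕ) : poch a (k + 1) = poch a k * (a + k) :=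
  prod_range_succ _ _

theorem poch_pos {a : ℝ} (ha : 0 < a) (k : ℕ) : 0 < poch a k := by
  rw [poch_eq_ascPochhammer_eval]
  exact ascPochhammer_pos k a ha

theorem poch_neg_natCast (m k : ℕ) : poch (-(m : ℝ)) k = (-1) ^ k * m.descFactorial k := by
  rw [poch_eq_ascPochhammer_eval, ascPochhammer_eval_neg_eq_descPochhammer,
    descPochhammer_eval_eq_descFactorial]

theorem poch_one_sub_add_natCast (b : ℝ) (k : ℕ) :
    poch (1 - (b + k)) k = (-1) ^ k * poch b k := by
  rw [show 1 - (b + k) = -(b + k - 1) by ring, poch_eq_ascPochhammer_eval,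
    ascPochhammer_eval_neg_eq_descPochhammer, descPochhammer_eval_eq_ascPochhammer,
    poch_eq_ascPochhammer_eval, show b + k - 1 - k + 1 = b by ring]

theorem poch_mul_poch_add_half (a : ℝ) (k : ℕ) :
    poch a k * poch (a + 1 / 2) k * 4 ^ k = poch (2 * a) (2 * k) := by
  induction k with
  | zero => simp [poch]
  | succ k ih =>
    rw [show 2 * (k + 1) = 2 * k + 1 + 1 by ring, poch_succ, poch_succ, poch_succ (2 * a),
      poch_succ (2 * a), ← ih]
    push_cast
    ring

theorem Gamma_add_natCast_eq_poch_mul {b : ℝ} (hb : 0 < b) (k : ℕ) :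
    Gamma (b + k) = poch b k * Gamma b := by
  induction k with
  | zero => simp [poch]
  | succ k ih =>
    rw [Nat.cast_succ, ← add_assoc, Gamma_add_one (by positivity), ih, poch_succ]
    ring

theorem poch_neg_natCast_mul_poch_half_sub (r k : ℕ) :
    poch (-(r : ℝ)) k * poch (1 / 2 - r) k * 4 ^ k = (2 * r).descFactorial (2 * k) := by
  rw [show 1 / 2 - (r : ℝ) = -r + 1 / 2 by ring, poch_mul_poch_add_half,
    show 2 * -(r : ℝ) = -((2 * r : ℕ) : ℝ) by push_cast; ring, poch_neg_natCast, pow_mul]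
  norm_num

/-- `(-1)ᵏ n! / (k! (n-2k)!)`, written with `n.choose (2k)` so that it vanishes for `2k > n`
instead of silently truncating `n - 2k`. -/
noncomputable def hermCoeff (n k : ℕ) : ℝ := (-1) ^ k * n.choose (2 * k) * (2 * k)! / k !

theorem hermCoeff_zero_right (n : ℕ) : hermCoeff n 0 = 1 := by
  simp [hermCoeff]

theorem hermCoeff_add_two_succ (n k : ℕ) :
    hermCoeff (n + 2) (k + 1) = hermCoeff (n + 1) (k + 1) - 2 * (n + 1) * hermCoeff n k := by
  have pascal := Nat.choose_succ_succ' (n + 1) (2 * k + 1)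
  have absorb : ((n : ℝ) + 1) * n.choose (2 * k) = (n + 1).choose (2 * k + 1) * (2 * k + 1) := by
    exact_mod_cast Nat.add_one_mul_choose_eq n (2 * k)
  simp only [hermCoeff, show 2 * (k + 1) = 2 * k + 1 + 1 by ring, pascal, Nat.factorial_succ]
  push_cast
  field_simp
  linear_combination (-1) ^ k * (2 * (k : ℝ) + 2) * absorb

theorem Herm_eq_sum_hermCoeff (n N : ℕ) (hN : n < 2 * N) (x : ℝ) :
    Herm n x = ∑ k ∈ range N, hermCoeff n k * (2 * x) ^ (n - 2 * k) := by
  have hcoeff (k : ℕ) (hk : 2 * k ≤ n) :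
      (-1 : ℝ) ^ k * n ! / (k ! * (n - 2 * k)!) = hermCoeff n k := by
    have := Nat.choose_mul_factorial_mul_factorial hk
    rw [hermCoeff, ← this]
    push_cast
    field_simp
  rw [Herm]
  refine (sum_congr rfl fun k hk ↦ ?_).trans
    (sum_subset (range_subset_range.mpr (by omega)) fun k _ hk ↦ ?_)
  · rw [hcoeff k (by simp only [mem_range] at hk; omega)]
  · simp only [mem_range] at hk
    simp [hermCoeff, Nat.choose_eq_zero_of_lt (show n < 2 * k by omega)]

theorem hermCoeff_eq_descFactorial (n k : ℕ) :
    hermCoeff n k = (-1) ^ k * n.descFactorial (2 * k) / k ! := by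
  rw [hermCoeff, Nat.descFactorial_eq_factorial_mul_choose]
  push_cast
  ring

theorem Herm_add_two (n : ℕ) (x : ℝ) :
    Herm (n + 2) x = 2 * x * Herm (n + 1) x - 2 * (n + 1) * Herm n x := by
  have hmul (k : ℕ) : 2 * x * (hermCoeff (n + 1) k * (2 * x) ^ (n + 1 - 2 * k)) =
      hermCoeff (n + 1) k * (2 * x) ^ (n + 2 - 2 * k) := by
    rcases le_or_gt (2 * k) (n + 1) with hk | hk
    · rw [show n + 2 - 2 * k = n + 1 - 2 * k + 1 by omega, pow_succ]
      ring
    · simp [hermCoeff, Nat.choose_eq_zero_of_lt hk]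
  rw [Herm_eq_sum_hermCoeff (n + 2) (n + 3) (by omega),
    Herm_eq_sum_hermCoeff (n + 1) (n + 3) (by omega), Herm_eq_sum_hermCoeff n (n + 2) (by omega),
    mul_sum, mul_sum, sum_congr rfl fun k _ ↦ hmul k,
    sum_range_succ', sum_range_succ' _ (n + 2), hermCoeff_zero_right, hermCoeff_zero_right,
    add_sub_right_comm, ← sum_sub_distrib]
  congr 1
  refine sum_congr rfl fun k _ ↦ ?_
  rw [show n + 2 - 2 * (k + 1) = n - 2 * k by omega, hermCoeff_add_two_succ]
  ring

theorem Herm_zero (x : ℝ) : Herm 0 x = 1 := by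
  simp [Herm]

theorem Herm_one (x : ℝ) : Herm 1 x = 2 * x := by
  simp [Herm]

theorem two_mul_mul_Herm (n : ℕ) (x : ℝ) :
    2 * x * Herm n x = Herm (n + 1) x + 2 * n * Herm (n - 1) x := by
  cases n with
  | zero => simp [Herm_zero, Herm_one]
  | succ n =>
    rw [Herm_add_two]
    push_cast
    ring

theorem Nat.cast_choose_succ_mul {R : Type*} [CommRing R] (n k : ℕ) :
    (n.choose (k + 1) : R) * (k + 1) = n.choose k * (n - k) := by
  rcases le_or_gt k n with hk | hk
  · have := congrArg (Nat.cast (R := R)) (Nat.choose_succ_right_eq n k)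
    push_cast [Nat.cast_sub hk] at this
    exact this
  · simp [Nat.choose_eq_zero_of_lt hk, Nat.choose_eq_zero_of_lt (Nat.lt_succ_of_lt hk)]

noncomputable def hermLinCoeff (m n k : ℕ) : ℝ := m.choose k * n.choose k * k ! * 2 ^ k

theorem hermLinCoeff_eq_zero_of_lt_left {m n k : ℕ} (h : m < k) : hermLinCoeff m n k = 0 := by
  simp [hermLinCoeff, Nat.choose_eq_zero_of_lt h]

theorem hermLinCoeff_eq_zero_of_lt_right {m n k : ℕ} (h : n < k) : hermLinCoeff m n k = 0 := by
  simp [hermLinCoeff, Nat.choose_eq_zero_of_lt h]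

theorem hermLinCoeff_add_two_succ (m n k : ℕ) :
    hermLinCoeff (m + 2) n (k + 1) = hermLinCoeff (m + 1) n (k + 1) +
      2 * ((m : ℝ) + 1 + n - 2 * k) * hermLinCoeff (m + 1) n k -
      2 * (m + 1) * hermLinCoeff m n k := by
  have pascal := Nat.choose_succ_succ' (m + 1) k
  have hn := Nat.cast_choose_succ_mul (R := ℝ) n k
  have hm := Nat.cast_choose_succ_mul (R := ℝ) (m + 1) k
  have absorb : ((m : ℝ) + 1) * m.choose k = (m + 1).choose (k + 1) * (k + 1) := by
    exact_mod_cast Nat.add_one_mul_choose_eq m k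
  simp only [hermLinCoeff, pascal, Nat.factorial_succ]
  push_cast at hm ⊢
  linear_combination (2 * 2 ^ k * (k ! : ℝ)) * (((m + 1).choose k : ℝ) * hn +
    (n.choose k : ℝ) * (hm + absorb))

theorem hermLinCoeff_zero_right (m n : ℕ) : hermLinCoeff m n 0 = 1 := by
  simp [hermLinCoeff]

theorem Herm_mul_Herm (m n : ℕ) (x : ℝ) :
    Herm m x * Herm n x = ∑ k ∈ range (m + 1), hermLinCoeff m n k * Herm (m + n - 2 * k) x := by
  induction m using Nat.twoStepInduction with
  | zero => simp [hermLinCoeff, Herm_zero]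
  | one =>
    rw [Herm_one, two_mul_mul_Herm, sum_range_succ, sum_range_one,
      show 1 + n - 2 * 1 = n - 1 by omega]
    simp only [hermLinCoeff, Nat.choose_self, Nat.choose_zero_right, Nat.choose_one_right,
      Nat.factorial_zero, Nat.factorial_one, add_comm 1 n]
    push_cast
    ring
  | more m ih₀ ih₁ =>
    have hmul (k : ℕ) : 2 * x * (hermLinCoeff (m + 1) n k * Herm (m + 1 + n - 2 * k) x) =
        hermLinCoeff (m + 1) n k * Herm (m + 2 + n - 2 * k) x +
          2 * ((m : ℝ) + 1 + n - 2 * k) * hermLinCoeff (m + 1) n k * Herm (m + n - 2 * k) x := by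
      rcases le_or_gt k n with hkn | hkn
      · rcases le_or_gt k (m + 1) with hkm | hkm
        · rw [mul_left_comm, two_mul_mul_Herm,
            show m + 1 + n - 2 * k + 1 = m + 2 + n - 2 * k by omega,
            show m + 1 + n - 2 * k - 1 = m + n - 2 * k by omega, Nat.cast_sub (by omega)]
          push_cast
          ring
        · simp [hermLinCoeff_eq_zero_of_lt_left hkm]
      · simp [hermLinCoeff_eq_zero_of_lt_right hkn]
    have hshift : ∑ k ∈ range (m + 2), hermLinCoeff (m + 1) n k * Herm (m + 2 + n - 2 * k) x =
        ∑ k ∈ range (m + 2), hermLinCoeff (m + 1) n (k + 1) * Herm (m + n - 2 * k) x +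
          Herm (m + 2 + n) x := by
      rw [sum_range_succ' (fun k ↦ hermLinCoeff (m + 1) n k * Herm (m + 2 + n - 2 * k) x),
        sum_range_succ (fun k ↦ hermLinCoeff (m + 1) n (k + 1) * Herm (m + n - 2 * k) x),
        hermLinCoeff_eq_zero_of_lt_left (show m + 1 < m + 1 + 1 by omega),
        hermLinCoeff_zero_right, zero_mul, add_zero, one_mul, mul_zero, Nat.sub_zero]
      congr 1
      exact sum_congr rfl fun k _ ↦ by rw [show m + 2 + n - 2 * (k + 1) = m + n - 2 * k by omega]
    calc Herm (m + 2) x * Herm n x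
        = 2 * x * (Herm (m + 1) x * Herm n x) - 2 * (m + 1) * (Herm m x * Herm n x) := by
          rw [Herm_add_two]; ring
      _ = ∑ k ∈ range (m + 2), (hermLinCoeff (m + 1) n k * Herm (m + 2 + n - 2 * k) x +
            2 * ((m : ℝ) + 1 + n - 2 * k) * hermLinCoeff (m + 1) n k * Herm (m + n - 2 * k) x) -
          ∑ k ∈ range (m + 2), 2 * (m + 1) * hermLinCoeff m n k * Herm (m + n - 2 * k) x := by
          rw [ih₁, ih₀, mul_sum, mul_sum, sum_congr rfl fun k _ ↦ hmul k,
            sum_range_succ (fun k ↦ 2 * ((m : ℝ) + 1) * hermLinCoeff m n k * _),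
            hermLinCoeff_eq_zero_of_lt_left (Nat.lt_succ_self m)]
          simp only [mul_assoc, zero_mul, mul_zero, add_zero]
      _ = _ := by
        rw [sum_add_distrib, hshift,
          sum_range_succ' (fun k ↦ hermLinCoeff (m + 2) n k * Herm (m + 2 + n - 2 * k) x),
          hermLinCoeff_zero_right, one_mul, Nat.mul_zero, Nat.sub_zero, add_right_comm,
          add_sub_right_comm, ← sum_add_distrib, ← sum_sub_distrib]
        congr 1
        refine sum_congr rfl fun k _ ↦ ?_
        rw [show m + 2 + n - 2 * (k + 1) = m + n - 2 * k by omega, hermLinCoeff_add_two_succ]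
        ring

theorem Herm_sq_eq_sum (n : ℕ) (x : ℝ) :
    Herm n x ^ 2 = ∑ k ∈ range (n + 1), hermLinCoeff n n k * Herm (2 * (n - k)) x := by
  rw [sq, Herm_mul_Herm]
  exact sum_congr rfl fun k _ ↦ by rw [show n + n - 2 * k = 2 * (n - k) by omega]

theorem integrable_pow_mul_exp_neg_mul_sq {β : ℝ} (hβ : 0 < β) (p : ℕ) :
    Integrable fun x : ℝ ↦ x ^ p * exp (-β * x ^ 2) := by
  simpa [Real.rpow_natCast] using
    integrable_rpow_mul_exp_neg_mul_sq hβ (s := p) (neg_one_lt_zero.trans_le p.cast_nonneg)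

theorem integral_pow_two_mul_mul_exp_neg_mul_sq {β : ℝ} (hβ : 0 < β) (m : ℕ) :
    ∫ x : ℝ, x ^ (2 * m) * exp (-β * x ^ 2) =
      β ^ (-((m : ℝ) + 1 / 2)) * Gamma (m + 1 / 2) := by
  have hsymm : ∫ x : ℝ, x ^ (2 * m) * exp (-β * x ^ 2) =
      ∫ x : ℝ, |x| ^ ((2 * m : ℕ) : ℝ) * exp (-β * |x| ^ (2 : ℝ)) := by
    congr 1 with x
    rw [Real.rpow_natCast, Real.rpow_two, pow_mul, pow_mul, sq_abs]
  rw [hsymm,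
    integral_comp_abs (f := fun y ↦ y ^ ((2 * m : ℕ) : ℝ) * exp (-β * y ^ (2 : ℝ))),
    integral_rpow_mul_exp_neg_mul_rpow two_pos
      (neg_one_lt_zero.trans_le (Nat.cast_nonneg _)) hβ]
  push_cast
  rw [show -(2 * (m : ℝ) + 1) / 2 = -(m + 1 / 2) by ring,
    show (2 * (m : ℝ) + 1) / 2 = m + 1 / 2 by ring]
  ring

theorem pow_mul_exp_neg_mul_sq_mul_Herm_eq_sum (β : ℝ) (p m : ℕ) :
    (fun x : ℝ ↦ x ^ p * exp (-β * x ^ 2) * Herm m x) = fun x ↦ ∑ k ∈ range (m + 1),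
      hermCoeff m k * 2 ^ (m - 2 * k) * (x ^ (p + (m - 2 * k)) * exp (-β * x ^ 2)) := by
  ext x
  rw [Herm_eq_sum_hermCoeff m (m + 1) (by omega), mul_sum]
  refine sum_congr rfl fun k _ ↦ ?_
  rw [mul_pow, pow_add]
  ring

theorem integrable_pow_mul_exp_neg_mul_sq_mul_Herm {β : ℝ} (hβ : 0 < β) (p m : ℕ) :
    Integrable fun x : ℝ ↦ x ^ p * exp (-β * x ^ 2) * Herm m x := by
  rw [pow_mul_exp_neg_mul_sq_mul_Herm_eq_sum]
  exact integrable_finsetSum _ fun k _ ↦ (integrable_pow_mul_exp_neg_mul_sq hβ _).const_mul _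

theorem integral_pow_two_mul_mul_exp_neg_mul_sq_mul_Herm_two_mul {β : ℝ} (hβ : 0 < β)
    (σ r : ℕ) :
    ∫ x : ℝ, x ^ (2 * σ) * exp (-β * x ^ 2) * Herm (2 * r) x =
      4 ^ r * β ^ (-((r : ℝ) + σ + 1 / 2)) * Gamma (r + σ + 1 / 2) *
        hyp2F1 r (1 / 2 - r) (1 / 2 - r - σ) β := by
  rw [pow_mul_exp_neg_mul_sq_mul_Herm_eq_sum, integral_finsetSum _ fun k _ ↦
    (integrable_pow_mul_exp_neg_mul_sq hβ _).const_mul _, hyp2F1, mul_sum,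
    ← sum_subset (range_subset_range.mpr (by omega : r + 1 ≤ 2 * r + 1)) fun j _ hj ↦ ?_]
  · refine sum_congr rfl fun j hj ↦ ?_
    have hjr : j ≤ r := by simp only [mem_range] at hj; omega
    set b : ℝ := ((σ + (r - j) : ℕ) : ℝ) + 1 / 2 with hb_def
    have hb : 0 < b := by positivity
    have hshift : (r : ℝ) + σ + 1 / 2 = b + j := by
      push_cast [hb_def, Nat.cast_sub hjr]
      ring
    have hrefl : 1 / 2 - (r : ℝ) - σ = 1 - (b + j) := by rw [← hshift]; ring
    have hpow : β ^ (-(b + j)) * β ^ j = β ^ (-b) := by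
      rw [← Real.rpow_natCast, ← Real.rpow_add hβ]
      congr 1
      ring
    have hfour : (4 : ℝ) ^ r = 2 ^ (2 * r - 2 * j) * 4 ^ j := by
      rw [show 2 * r - 2 * j = 2 * (r - j) by omega, pow_mul, show (2 : ℝ) ^ 2 = 4 by norm_num,
        ← pow_add, Nat.sub_add_cancel hjr]
    have hdup := poch_neg_natCast_mul_poch_half_sub r j
    rw [integral_const_mul, show 2 * σ + (2 * r - 2 * j) = 2 * (σ + (r - j)) by omega,
      integral_pow_two_mul_mul_exp_neg_mul_sq hβ, ← hb_def, hshift, hrefl,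
      Gamma_add_natCast_eq_poch_mul hb, poch_one_sub_add_natCast, hermCoeff_eq_descFactorial,
      ← hdup, ← hpow, hfour]
    have := (poch_pos hb j).ne'
    field_simp
    rw [← pow_mul, pow_mul', neg_one_sq, one_pow, one_mul]
  · simp only [mem_range] at hj
    simp [hermCoeff, Nat.choose_eq_zero_of_lt (show 2 * r < 2 * j by omega)]

/-- diagonal (`m = n`) Krein-like 2-functional of Hermite polynomials
(algebraic approach). -/
theorem hermite_krein_2_functional_algebraic_diagonal (n s : ℕ) (hs : Even s)
    (β : ℝ) (hβ : 0 < β) :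
    ∫ x : ℝ, x ^ s * Real.exp (-β * x ^ 2) * (Herm n x) ^ 2 =
      (2 : ℝ) ^ (2 * n) * β ^ (-(n : ℝ) - ((s : ℝ) + 1) / 2) *
        ∑ k ∈ Finset.range (n + 1),
          (n.choose k : ℝ) ^ 2 * (k.factorial : ℝ) * (β / 2) ^ k *
            Real.Gamma (1 / 2 - (k : ℝ) + (n : ℝ) + (s : ℝ) / 2) *
            hyp2F1 (n - k) (1 / 2 + (k : ℝ) - (n : ℝ))
              (1 / 2 + (k : ℝ) - (n : ℝ) - (s : ℝ) / 2) β := by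
  obtain ⟨σ, rfl⟩ := hs
  simp_rw [Herm_sq_eq_sum, mul_sum, mul_left_comm _ (hermLinCoeff n n _) (Herm _ _),
    ← two_mul σ]
  rw [integral_finsetSum _ fun k _ ↦
    ((integrable_pow_mul_exp_neg_mul_sq_mul_Herm hβ _ _).const_mul _)]
  refine sum_congr rfl fun k hk ↦ ?_
  have hkn : k ≤ n := by simp only [mem_range] at hk; omega
  have hpow : β ^ (-(n : ℝ) - ((2 * σ : ℕ) + 1) / 2) * β ^ k =
      β ^ (-((n - k : ℕ) + σ + 1 / 2 : ℝ)) := by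
    rw [← Real.rpow_natCast, ← Real.rpow_add hβ]
    push_cast [Nat.cast_sub hkn]
    congr 1
    ring
  have htwo : (2 : ℝ) ^ (2 * n) = 4 ^ (n - k) * 2 ^ k * 2 ^ k := by
    rw [show 2 * n = 2 * (n - k) + k + k by omega, pow_add, pow_add, pow_mul]
    norm_num
  rw [integral_const_mul, integral_pow_two_mul_mul_exp_neg_mul_sq_mul_Herm_two_mul hβ, div_pow,
    ← hpow, htwo, hermLinCoeff]
  push_cast [Nat.cast_sub hkn]
  rw [show (1 : ℝ) / 2 - (n - k) = 1 / 2 + k - n by ring,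
    show (1 : ℝ) / 2 + k - n - σ = 1 / 2 + k - n - 2 * σ / 2 by ring,
    show (n : ℝ) - k + σ + 1 / 2 = 1 / 2 - k + n + 2 * σ / 2 by ring]
  field_simp
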